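/- (Theorem 2: adaptive interference distributions) Consider a k-user memoryless interference channel given by a Markov kernel K from (ℝⁿ)^k to a standard Borel output space 𝒴₁, together with positive scaling constants α₂, …, α_k and an unbounded cost function b on ℝⁿ. For an input probability measure μ₁ on ℝⁿ, let μ_i (i = 2, …, k) be the pushforward of μ₁ under x ↦ x/α_i, and let K̄_{μ₁} be the primary channel, the Markov kernel from ℝⁿ to 𝒴₁ given by K̄_{μ₁}(·|x₁) = ∫⋯∫ K(·|x₁, x₂, …, x_k) dμ₂(x₂)⋯dμ_k(x_k). Then the primary capacity–cost function C(β) := sup { I(μ₁, K̄_{μ₁}) : μ₁ a probability measure on ℝⁿ with ∫ b dμ₁ = β } is a nondecreasing function of β. -/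

import Mathlib

open MeasureTheory ProbabilityTheory
open scoped ENNReal NNReal

/-- Kullback–Leibler divergence between two measures, valued in `ℝ≥0∞`. -/
noncomputable def klDiv {Ω : Type*} [MeasurableSpace Ω] (μ ν : Measure Ω) : ℝ≥0∞ :=
  open scoped Classical in
  if μ ≪ ν ∧ Integrable (llr μ ν) μ then ENNReal.ofReal (∫ x, llr μ ν x ∂μ) else ⊤

/-- Mutual information `I(X₁;Y₁)` between the primary input `X₁` and the primary output `Y₁`
of a `k`-user memoryless interference channel `K`, when the `k` inputs are independent with
laws `μs i`.  The joint law of `(X₁, Y₁)` is the pushforward of `(Measure.pi μs) ⊗ₘ K` under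
`(x, y) ↦ (x 0, y)`; this equals the mutual information `I(μs 0, K̄)` of the primary channel
`K̄(·|x₁) = ∫⋯∫ K(·|x₁, x₂, …, x_k) dμs(x₂)⋯dμs(x_k)`. -/
noncomputable def primaryMI {k : ℕ} [NeZero k] {𝒳 𝒴 : Type*} [MeasurableSpace 𝒳]
    [MeasurableSpace 𝒴] (K : Kernel (Fin k → 𝒳) 𝒴) (μs : Fin k → Measure 𝒳) : ℝ≥0∞ :=
  klDiv (((Measure.pi μs) ⊗ₘ K).map (fun p => (p.1 0, p.2)))
    (((((Measure.pi μs) ⊗ₘ K).map (fun p => (p.1 0, p.2))).fst).prod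
      ((((Measure.pi μs) ⊗ₘ K).map (fun p => (p.1 0, p.2))).snd))

/-- The primary capacity–cost function in the adaptive-interference scenario: every user `i`
transmits with the rescaled version `μᵢ = (x ↦ x / αᵢ)_* μ₁` of the primary user's input
distribution `μ₁` (with `α 0 = 1`, so that user `0` is the primary user), and the supremum of
the primary mutual information is taken over all probability measures `μ₁` on `ℝⁿ` with cost
exactly `β`. -/
noncomputable def adaptiveCapacity {n k : ℕ} [NeZero k] {𝒴 : Type*} [MeasurableSpace 𝒴]
    (K : Kernel (Fin k → (Fin n → ℝ)) 𝒴) (α : Fin k → ℝ)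
    (b : (Fin n → ℝ) → ℝ≥0) (β : ℝ≥0) : ℝ≥0∞ :=
  ⨆ μ₁ : {μ : Measure (Fin n → ℝ) //
      IsProbabilityMeasure μ ∧ ∫⁻ x, (b x : ℝ≥0∞) ∂μ = (β : ℝ≥0∞)},
    primaryMI K (fun i => (μ₁ : Measure (Fin n → ℝ)).map (fun x j => x j / α i))

/-!
Fix an input law `μ` of cost `β'` and `q < 1`. Moving mass `1 - q` of `μ` to a point of suitable
cost (it exists since `b` is onto) gives a law `μ'` of cost `β` with `q • μ ≤ μ'`. All users rescale
the same law, so the joint law `P'` of primary input and output under `μ'` dominates `c • P`,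
`c = q ^ k`, where `P` is the joint law under `μ`. Splitting `P' = c • P + R` and using that the
unnormalised Kullback–Leibler divergence is superadditive up to the mass of the reference measure,
`c · D(P ‖ Q) ≤ D(P' ‖ Q) + h(c)` with `h` the binary entropy. For `Q` the product of the marginals
of `P'`, the chain rule shows `I(P) ≤ D(P ‖ Q)`, hence `c · I(P) ≤ I(P') + h(c) ≤ C(β) + h(c)`;
letting `q → 1` gives `I(P) ≤ C(β)`.
-/

open Set Filter Topology Real

lemma klDiv_eq_informationTheory_klDiv {Ω : Type*} [MeasurableSpace Ω] {μ ν : Measure Ω}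
    [IsFiniteMeasure μ] [IsFiniteMeasure ν] (h : μ univ = ν univ) :
    klDiv μ ν = InformationTheory.klDiv μ ν := by
  -- Mathlib's divergence carries the mass correction `ν.real univ - μ.real univ`.
  simp [klDiv, InformationTheory.klDiv_def, measureReal_def, h]

namespace InformationTheory

variable {Ω X Y : Type*} [MeasurableSpace Ω] [MeasurableSpace X] [MeasurableSpace Y]

lemma klDiv_fst_prod_le [StandardBorelSpace Y] [Nonempty Y] (P : Measure (X × Y))
    [IsFiniteMeasure P] (Q₁ : Measure X) (Q₂ : Measure Y) [IsFiniteMeasure Q₁]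
    [IsProbabilityMeasure Q₂] :
    klDiv P (P.fst.prod Q₂) ≤ klDiv P (Q₁.prod Q₂) := by
  have h := klDiv_compProd_eq_add P.fst Q₁ P.condKernel (Kernel.const X Q₂)
  rw [Measure.disintegrate, Measure.compProd_const, Measure.compProd_const] at h
  exact h ▸ le_add_self

lemma klDiv_map_swap (P Q : Measure (X × Y)) [IsFiniteMeasure P] [IsFiniteMeasure Q] :
    klDiv (P.map Prod.swap) (Q.map Prod.swap) = klDiv P Q := by
  refine le_antisymm (klDiv_map_le P Q measurable_swap) ?_
  have h := klDiv_map_le (P.map Prod.swap) (Q.map Prod.swap) measurable_swap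
  rwa [Measure.map_map measurable_swap measurable_swap, Measure.map_map measurable_swap
    measurable_swap, Prod.swap_swap_eq, Measure.map_id, Measure.map_id] at h

lemma klDiv_fst_prod_snd_le [StandardBorelSpace X] [Nonempty X] [StandardBorelSpace Y]
    [Nonempty Y] (P : Measure (X × Y)) [IsProbabilityMeasure P] (Q₁ : Measure X)
    (Q₂ : Measure Y) [IsProbabilityMeasure Q₁] [IsProbabilityMeasure Q₂] :
    klDiv P (P.fst.prod P.snd) ≤ klDiv P (Q₁.prod Q₂) := by
  calc klDiv P (P.fst.prod P.snd)
      = klDiv (P.map Prod.swap) ((P.map Prod.swap).fst.prod P.fst) := by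
        rw [Measure.fst_map_swap, ← Measure.prod_swap (μ := P.fst), klDiv_map_swap]
    _ ≤ klDiv (P.map Prod.swap) (Q₂.prod P.fst) := klDiv_fst_prod_le _ _ _
    _ = klDiv P (P.fst.prod Q₂) := by rw [← Measure.prod_swap (μ := P.fst), klDiv_map_swap]
    _ ≤ klDiv P (Q₁.prod Q₂) := klDiv_fst_prod_le P Q₁ Q₂

lemma klDiv_nnreal_smul_left (μ ν : Measure Ω) [IsProbabilityMeasure μ] [IsProbabilityMeasure ν]
    (c : ℝ≥0) : klDiv (c • μ) ν = c * klDiv μ ν + ENNReal.ofReal (klFun c) := by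
  rcases eq_or_ne c 0 with rfl | hc
  · simp [klFun_zero]
  have hc' : (c : ℝ≥0∞) ≠ 0 := by simpa
  by_cases hac : μ ≪ ν
  swap
  · have hac' : ¬ c • μ ≪ ν := fun h ↦ hac <|
      (Measure.absolutelyContinuous_smul hc').trans (by rwa [Measure.coe_nnreal_smul])
    simp [klDiv_of_not_ac hac, klDiv_of_not_ac hac', ENNReal.mul_top hc']
  have hint : Integrable (llr (c • μ) ν) (c • μ) ↔ Integrable (llr μ ν) μ := by
    rw [← Measure.coe_nnreal_smul, integrable_smul_measure hc' ENNReal.coe_ne_top,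
      Measure.coe_nnreal_smul, integrable_congr (llr_smul_nnreal_left hac c hc),
      integrable_add_const_iff]
  by_cases hi : Integrable (llr μ ν) μ
  swap
  · simp [klDiv_of_not_integrable hi, klDiv_of_not_integrable (hint.not.2 hi), ENNReal.mul_top hc']
  rw [← ENNReal.ofReal_toReal (klDiv_ne_top (hac.smul_left c) (hint.2 hi)),
    toReal_klDiv_smul_left hac hi c, ← ENNReal.ofReal_toReal (klDiv_ne_top hac hi),
    ← ENNReal.ofReal_coe_nnreal, ← ENNReal.ofReal_mul c.coe_nonneg,
    ← ENNReal.ofReal_add (by positivity) (klFun_nonneg c.coe_nonneg)]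
  simp only [probReal_univ, klFun_apply, ENNReal.toReal_ofReal ENNReal.toReal_nonneg]
  congr 1
  ring

lemma klFun_add_klFun_le {a b : ℝ} (ha : 0 ≤ a) (hb : 0 ≤ b) :
    klFun a + klFun b ≤ klFun (a + b) + 1 := by
  have mul_log_le {x : ℝ} (hx : 0 ≤ x) (hxy : x ≤ a + b) : x * log x ≤ x * log (a + b) := by
    rcases hx.eq_or_lt with rfl | hx
    · simp
    · gcongr
  simp only [klFun_apply]
  nlinarith [mul_log_le ha (by linarith), mul_log_le hb (by linarith)]

lemma klDiv_add_klDiv_le (μ₁ μ₂ ν : Measure Ω) [IsFiniteMeasure μ₁] [IsFiniteMeasure μ₂]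
    [IsFiniteMeasure ν] : klDiv μ₁ ν + klDiv μ₂ ν ≤ klDiv (μ₁ + μ₂) ν + ν univ := by
  by_cases hac : μ₁ + μ₂ ≪ ν
  swap
  · simp [klDiv_of_not_ac hac]
  obtain ⟨hac₁, hac₂⟩ := Measure.AbsolutelyContinuous.add_left_iff.1 hac
  rw [klDiv_eq_lintegral_klFun_of_ac hac₁, klDiv_eq_lintegral_klFun_of_ac hac₂,
    klDiv_eq_lintegral_klFun_of_ac hac, ← lintegral_one, ← lintegral_add_left (by fun_prop),
    ← lintegral_add_left (by fun_prop)]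
  refine lintegral_mono_ae ?_
  filter_upwards [Measure.rnDeriv_add μ₁ μ₂ ν, Measure.rnDeriv_lt_top μ₁ ν,
    Measure.rnDeriv_lt_top μ₂ ν] with x hx hx₁ hx₂
  rw [hx, Pi.add_apply, ENNReal.toReal_add hx₁.ne hx₂.ne,
    ← ENNReal.ofReal_add (klFun_nonneg ENNReal.toReal_nonneg) (klFun_nonneg ENNReal.toReal_nonneg),
    ← ENNReal.ofReal_one, ← ENNReal.ofReal_add (klFun_nonneg (by positivity)) zero_le_one]
  exact ENNReal.ofReal_le_ofReal (klFun_add_klFun_le ENNReal.toReal_nonneg ENNReal.toReal_nonneg)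

lemma klFun_add_klFun_one_sub_add_binEntropy (c : ℝ) :
    klFun c + klFun (1 - c) + binEntropy c = 1 := by
  simp only [klFun_apply, binEntropy, log_inv]
  ring

lemma mul_klDiv_le_klDiv_add_binEntropy {P M Q : Measure Ω} [IsProbabilityMeasure P]
    [IsProbabilityMeasure M] [IsProbabilityMeasure Q] {c : ℝ≥0} (hc : c ≤ 1) (hle : c • P ≤ M) :
    c * klDiv P Q ≤ klDiv M Q + ENNReal.ofReal (binEntropy c) := by
  set R := M - c • P
  have hR : R.real univ = 1 - c := by
    rw [measureReal_def, Measure.sub_apply MeasurableSet.univ hle, ENNReal.toReal_sub_of_le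
      (hle univ) (measure_ne_top M univ)]
    simp
  have h_add : klDiv (c • P) Q + klDiv R Q ≤ klDiv M Q + 1 := by
    have hM : c • P + R = M := by rw [add_comm]; exact Measure.sub_add_cancel_of_le hle
    simpa [hM] using klDiv_add_klDiv_le (c • P) R Q
  have h_rest : ENNReal.ofReal (klFun (1 - c)) ≤ klDiv R Q := by
    simpa [hR, klFun_apply] using mul_log_le_klDiv R Q
  have h_one : ENNReal.ofReal (klFun c) + ENNReal.ofReal (klFun (1 - c))
      + ENNReal.ofReal (binEntropy c) = 1 := by
    have hc' : (c : ℝ) ≤ 1 := by exact_mod_cast hc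
    have h₁ := klFun_nonneg c.coe_nonneg
    have h₂ := klFun_nonneg (sub_nonneg.2 hc')
    rw [← ENNReal.ofReal_add h₁ h₂, ← ENNReal.ofReal_add (by positivity)
      (binEntropy_nonneg c.coe_nonneg hc'), klFun_add_klFun_one_sub_add_binEntropy,
      ENNReal.ofReal_one]
  refine ENNReal.le_of_add_le_add_right
    (a := ENNReal.ofReal (klFun c) + ENNReal.ofReal (klFun (1 - c))) (by simp) ?_
  calc c * klDiv P Q + (ENNReal.ofReal (klFun c) + ENNReal.ofReal (klFun (1 - c)))
      ≤ klDiv (c • P) Q + klDiv R Q := by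
        rw [klDiv_nnreal_smul_left, ← add_assoc]
        gcongr
    _ ≤ klDiv M Q + 1 := h_add
    _ = _ := by rw [← h_one]; ring

end InformationTheory

section MutualInfo

variable {X Y : Type*} [MeasurableSpace X] [MeasurableSpace Y]

noncomputable def mutualInfo (P : Measure (X × Y)) : ℝ≥0∞ :=
  klDiv P (P.fst.prod P.snd)

lemma mutualInfo_eq_klDiv (P : Measure (X × Y)) [IsProbabilityMeasure P] :
    mutualInfo P = InformationTheory.klDiv P (P.fst.prod P.snd) :=
  klDiv_eq_informationTheory_klDiv (by simp)

lemma mul_mutualInfo_le_of_smul_le [StandardBorelSpace X] [Nonempty X] [StandardBorelSpace Y]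
    [Nonempty Y] {P P' : Measure (X × Y)} [IsProbabilityMeasure P] [IsProbabilityMeasure P']
    {c : ℝ≥0} (hc : c ≤ 1) (hle : c • P ≤ P') :
    c * mutualInfo P ≤ mutualInfo P' + ENNReal.ofReal (binEntropy c) := by
  rw [mutualInfo_eq_klDiv, mutualInfo_eq_klDiv]
  calc c * InformationTheory.klDiv P (P.fst.prod P.snd)
      ≤ c * InformationTheory.klDiv P (P'.fst.prod P'.snd) := by
        gcongr
        exact InformationTheory.klDiv_fst_prod_snd_le P _ _
    _ ≤ _ := InformationTheory.mul_klDiv_le_klDiv_add_binEntropy hc hle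

end MutualInfo

namespace MeasureTheory.Measure

variable {ι : Type*} [Fintype ι] {α : ι → Type*} [∀ i, MeasurableSpace (α i)]

lemma pi_mono {μ ν : ∀ i, Measure (α i)} (h : ∀ i, μ i ≤ ν i) : Measure.pi μ ≤ Measure.pi ν := by
  refine Measure.le_iff.2 fun s hs ↦ ?_
  rw [Measure.pi_def, Measure.pi_def, toMeasure_apply _ _ hs, toMeasure_apply _ _ hs]
  refine OuterMeasure.le_boundedBy.2 (fun t ↦ (OuterMeasure.boundedBy_le t).trans ?_) s
  exact Finset.prod_le_prod' fun i _ ↦ h i _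

lemma pi_nnreal_smul (μ : ∀ i, Measure (α i)) [∀ i, SigmaFinite (μ i)] (c : ℝ≥0) :
    Measure.pi (fun i ↦ c • μ i) = c ^ Fintype.card ι • Measure.pi μ := by
  refine Measure.pi_eq fun s _ ↦ ?_
  simp only [Measure.smul_apply, Measure.pi_pi, Finset.prod_mul_distrib, Finset.prod_const,
    Finset.card_univ, ENNReal.smul_def, smul_eq_mul, ENNReal.coe_pow]

lemma compProd_mono_left {𝒳 𝒴 : Type*} [MeasurableSpace 𝒳] [MeasurableSpace 𝒴]
    {μ ν : Measure 𝒳} [SFinite μ] [SFinite ν] (κ : Kernel 𝒳 𝒴) [IsSFiniteKernel κ]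
    (h : μ ≤ ν) : μ ⊗ₘ κ ≤ ν ⊗ₘ κ := by
  refine Measure.le_iff.2 fun s hs ↦ ?_
  rw [compProd_apply hs, compProd_apply hs]
  exact lintegral_mono' h le_rfl

end MeasureTheory.Measure

noncomputable def primaryJointLaw {k : ℕ} [NeZero k] {𝒳 𝒴 : Type*} [MeasurableSpace 𝒳]
    [MeasurableSpace 𝒴] (K : Kernel (Fin k → 𝒳) 𝒴) (μs : Fin k → Measure 𝒳) :
    Measure (𝒳 × 𝒴) :=
  ((Measure.pi μs) ⊗ₘ K).map (fun p ↦ (p.1 0, p.2))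

section PrimaryJointLaw

variable {k : ℕ} [NeZero k] {𝒳 𝒴 : Type*} [MeasurableSpace 𝒳] [MeasurableSpace 𝒴]
  (K : Kernel (Fin k → 𝒳) 𝒴)

lemma primaryMI_eq_mutualInfo (μs : Fin k → Measure 𝒳) :
    primaryMI K μs = mutualInfo (primaryJointLaw K μs) :=
  rfl

instance [IsMarkovKernel K] (μs : Fin k → Measure 𝒳) [∀ i, IsProbabilityMeasure (μs i)] :
    IsProbabilityMeasure (primaryJointLaw K μs) :=
  Measure.isProbabilityMeasure_map (by fun_prop)

lemma smul_primaryJointLaw_le [IsSFiniteKernel K] {μs μs' : Fin k → Measure 𝒳}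
    [∀ i, IsFiniteMeasure (μs i)] [∀ i, IsFiniteMeasure (μs' i)] {c : ℝ≥0} (h : ∀ i, c • μs i ≤ μs' i) :
    c ^ k • primaryJointLaw K μs ≤ primaryJointLaw K μs' := by
  have hpi : c ^ k • Measure.pi μs ≤ Measure.pi μs' := by
    simpa [Measure.pi_nnreal_smul] using Measure.pi_mono h
  rw [primaryJointLaw, primaryJointLaw, ← Measure.map_smul, ← Measure.coe_nnreal_smul,
    ← Measure.compProd_smul_left, Measure.coe_nnreal_smul]
  exact Measure.map_mono (Measure.compProd_mono_left K hpi) (by fun_prop)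

end PrimaryJointLaw

lemma exists_isProbabilityMeasure_lintegral_eq_of_le {X : Type*} [MeasurableSpace X]
    [MeasurableSingletonClass X] {b : X → ℝ≥0} (hb : Function.Surjective b) {μ : Measure X}
    [IsProbabilityMeasure μ] {β' β : ℝ≥0} (hμ : ∫⁻ x, b x ∂μ = β') (h : β' ≤ β) {q : ℝ≥0}
    (hq : q < 1) :
    ∃ μ' : Measure X, IsProbabilityMeasure μ' ∧ ∫⁻ x, b x ∂μ' = β ∧ q • μ ≤ μ' := by
  obtain ⟨x₀, hx₀⟩ := hb ((β - q * β') / (1 - q))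
  have hqβ' : q * β' ≤ β := (mul_le_of_le_one_left' hq.le).trans h
  refine ⟨q • μ + (1 - q) • Measure.dirac x₀, ⟨?_⟩, ?_, Measure.le_add_right le_rfl⟩
  · simpa using add_tsub_cancel_of_le (by exact_mod_cast hq.le : (q : ℝ≥0∞) ≤ 1)
  · rw [lintegral_add_measure, lintegral_smul_measure, lintegral_smul_measure, lintegral_dirac, hμ,
      hx₀, ENNReal.smul_def, ENNReal.smul_def, smul_eq_mul, smul_eq_mul]
    norm_cast
    rw [mul_div_cancel₀ _ (tsub_pos_of_lt hq).ne', add_tsub_cancel_of_le hqβ']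

lemma le_of_tendsto_mul_le_add_binEntropy {ι : Type*} {l : Filter ι} [l.NeBot] {c : ι → ℝ≥0}
    (hc : Tendsto c l (𝓝 1)) {a b : ℝ≥0∞}
    (h : ∀ᶠ i in l, c i * a ≤ b + ENNReal.ofReal (binEntropy (c i))) : a ≤ b := by
  have hc' : Tendsto (fun i ↦ (c i : ℝ≥0∞)) l (𝓝 1) := by
    simpa using ENNReal.tendsto_coe.2 hc
  refine le_of_tendsto_of_tendsto (by simpa using ENNReal.Tendsto.mul_const hc' (.inl one_ne_zero))
    ?_ h
  have hH : Tendsto (fun i ↦ binEntropy (c i)) l (𝓝 0) := by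
    simpa [Function.comp_def] using (binEntropy_continuous.tendsto 1).comp (NNReal.tendsto_coe.2 hc)
  simpa using (ENNReal.tendsto_ofReal hH).const_add b

theorem adaptive_interference_capacity_mono_general
    {n k : ℕ} [NeZero k] {𝒴 : Type*} [MeasurableSpace 𝒴] [StandardBorelSpace 𝒴]
    (K : Kernel (Fin k → (Fin n → ℝ)) 𝒴) [IsMarkovKernel K]
    (α : Fin k → ℝ)
    (b : (Fin n → ℝ) → ℝ≥0)
    (hb_unbounded : ∀ b₀ : ℝ≥0, ∃ x : Fin n → ℝ, b x = b₀)
    (β β' : ℝ≥0) (h : β' ≤ β) :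
    adaptiveCapacity K α b β' ≤ adaptiveCapacity K α b β := by
  refine iSup_le fun ⟨μ, hμ, hcost⟩ ↦ ?_
  have hT (i : Fin k) : Measurable fun (x : Fin n → ℝ) j ↦ x j / α i := by fun_prop
  have : Nonempty 𝒴 := nonempty_of_isProbabilityMeasure (K 0)
  have hc : Tendsto (fun q : ℝ≥0 ↦ q ^ k) (𝓝[<] 1) (𝓝 1) :=
    ((continuous_pow k).tendsto' 1 1 (one_pow k)).mono_left nhdsWithin_le_nhds
  have : (𝓝[<] (1 : ℝ≥0)).NeBot := nhdsLT_neBot_of_exists_lt ⟨0, one_pos⟩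
  refine le_of_tendsto_mul_le_add_binEntropy hc ?_
  filter_upwards [self_mem_nhdsWithin] with q (hq : q < 1)
  obtain ⟨μ', hμ', hcost', hle⟩ :=
    exists_isProbabilityMeasure_lintegral_eq_of_le hb_unbounded hcost h hq
  have (ν : Measure (Fin n → ℝ)) [IsProbabilityMeasure ν] (i : Fin k) :
      IsProbabilityMeasure (ν.map fun x j ↦ x j / α i) :=
    Measure.isProbabilityMeasure_map (hT i).aemeasurable
  have hle_map (i : Fin k) : q • μ.map (fun x j ↦ x j / α i) ≤ μ'.map (fun x j ↦ x j / α i) :=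
    Measure.map_smul q μ _ ▸ Measure.map_mono hle (hT i)
  calc ((q ^ k : ℝ≥0) : ℝ≥0∞) * primaryMI K (fun i ↦ μ.map (fun x j ↦ x j / α i))
      ≤ primaryMI K (fun i ↦ μ'.map (fun x j ↦ x j / α i))
        + ENNReal.ofReal (binEntropy (q ^ k : ℝ≥0)) := by
        rw [primaryMI_eq_mutualInfo, primaryMI_eq_mutualInfo]
        exact mul_mutualInfo_le_of_smul_le (pow_le_one₀ (by positivity) hq.le)
          (smul_primaryJointLaw_le K hle_map)
    _ ≤ adaptiveCapacity K α b β + ENNReal.ofReal (binEntropy (q ^ k : ℝ≥0)) := by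
        gcongr
        exact le_iSup_of_le ⟨μ', hμ', hcost'⟩ le_rfl

/-- Theorem 2 (adaptive interference distributions): for a `k`-user memoryless interference
channel from `(ℝⁿ)^k` to a standard Borel output space, positive scaling constants `α` with
`α 0 = 1`, and an unbounded cost function `b` on `ℝⁿ`, the primary capacity–cost function
`C(β) = sup { I(μ₁, K̄_{μ₁}) : μ₁ probability measure on ℝⁿ, ∫ b dμ₁ = β }` is nondecreasing. -/
theorem adaptive_interference_capacity_mono
    {n k : ℕ} [NeZero k] {𝒴 : Type*} [MeasurableSpace 𝒴] [StandardBorelSpace 𝒴]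
    (K : Kernel (Fin k → (Fin n → ℝ)) 𝒴) [IsMarkovKernel K]
    (α : Fin k → ℝ) (hα : ∀ i, 0 < α i) (hα0 : α 0 = 1)
    (b : (Fin n → ℝ) → ℝ≥0) (hb : Measurable b)
    (hb_unbounded : ∀ b₀ : ℝ≥0, ∃ x : Fin n → ℝ, b x = b₀)
    (β β' : ℝ≥0) (h : β' ≤ β) :
    adaptiveCapacity K α b β' ≤ adaptiveCapacity K α b β :=
  adaptive_interference_capacity_mono_general K α b hb_unbounded β β' h
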